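/- For η > 0, the brackets [X₀,X₁]=−X₂, [X₀,X₂]=−X₁, [X₁,X₂]=0, [x⁰,x¹]=ηx¹, [x⁰,x²]=ηx², [x¹,x²]=0, [x⁰,X₀]=0, [x⁰,X₁]=−ηX₁, [x⁰,X₂]=−ηX₂, [x¹,X₀]=−x², [x¹,X₁]=ηX₀, [x¹,X₂]=x⁰, [x²,X₀]=−x¹, [x²,X₁]=x⁰, [x²,X₂]=ηX₀ define a Lie algebra structure D' on the 6-dimensional real vector space with basis {X₀,X₁,X₂,x⁰,x¹,x²} (the classical double D(iso(1,1))), and the linear map ψ' : g_{η²} → D' determined by ψ'(J)=(X₂−x¹)/√(2η), ψ'(K₁)=−x⁰/η, ψ'(K₂)=−(X₂+x¹)/√(2η), ψ'(P₀)=√(η/2)(X₁−x²), ψ'(P₁)=√(η/2)(X₁+x²), ψ'(P₂)=−ηX₀ is a Lie algebra isomorphism. -/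

import Mathlib

/-!
Written in coordinates with respect to `(X₀, X₁, X₂, x⁰, x¹, x²)`, the bracket of `D'` is an
explicit bilinear map, and antisymmetry and the Jacobi identity are polynomial identities.
Writing `η = 2 s²`, so that `√(η/2) = s` and `√(2η) = 2s`, the prescribed images of
`J, P₀, P₁, P₂, K₁, K₂` are linearly independent, so `ψ'` is a linear isomorphism. Both brackets
being alternating and bilinear, `ψ'` is a Lie homomorphism as soon as it respects the fifteen
brackets `[bᵢ, bⱼ]` with `i < j`, and these are exactly the defining relations of `g_{η²}`.
-/

section

variable {R L M ι : Type*} [CommRing R] [LieRing L] [LieAlgebra R L] [AddCommGroup M] [Module R M]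

theorem LinearMap.map_lie_of_basis (b : Module.Basis ι R L) (ψ : L →ₗ[R] M)
    (br : M →ₗ[R] M →ₗ[R] M) (h : ∀ i j, ψ ⁅b i, b j⁆ = br (ψ (b i)) (ψ (b j))) (u v : L) :
    ψ ⁅u, v⁆ = br (ψ u) (ψ v) :=
  LinearMap.congr_fun₂ (f := (LieModule.toEnd R L L : L →ₗ[R] L →ₗ[R] L).compr₂ ψ)
    (g := br.compl₁₂ ψ ψ) (b.ext fun i => b.ext fun j => h i j) u v

theorem LinearMap.map_lie_of_basis_of_lt [LinearOrder ι] (b : Module.Basis ι R L)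
    (ψ : L →ₗ[R] M) (br : M →ₗ[R] M →ₗ[R] M) (hbr : br.IsAlt)
    (h : ∀ i j, i < j → ψ ⁅b i, b j⁆ = br (ψ (b i)) (ψ (b j))) (u v : L) :
    ψ ⁅u, v⁆ = br (ψ u) (ψ v) := by
  refine ψ.map_lie_of_basis b br (fun i j => ?_) u v
  rcases lt_trichotomy i j with hij | rfl | hij
  · exact h i j hij
  · rw [lie_self, map_zero, hbr]
  · rw [← lie_skew, map_neg, h j i hij, hbr.neg]

end

theorem Module.Basis.exists_linearEquiv_apply_eq {K V W ι : Type*} [DivisionRing K]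
    [AddCommGroup V] [Module K V] [AddCommGroup W] [Module K W] [FiniteDimensional K W]
    [Fintype ι] [Nonempty ι] (b : Module.Basis ι K V) {v : ι → W} (hv : LinearIndependent K v)
    (hcard : Fintype.card ι = Module.finrank K W) : ∃ e : V ≃ₗ[K] W, ∀ i, e (b i) = v i :=
  ⟨b.equiv (basisOfLinearIndependentOfCardEqFinrank hv hcard) (Equiv.refl ι), fun i => by
    rw [b.equiv_apply, Equiv.refl_apply, coe_basisOfLinearIndependentOfCardEqFinrank]⟩

namespace DoubleIso11

/-- The bracket of `D(iso(1,1))` in the coordinates `(X₀, X₁, X₂, x⁰, x¹, x²)`. -/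
def bracket (η : ℝ) : (Fin 6 → ℝ) →ₗ[ℝ] (Fin 6 → ℝ) →ₗ[ℝ] (Fin 6 → ℝ) :=
  LinearMap.mk₂ ℝ (fun u v => ![η * (u 4 * v 1 - u 1 * v 4) + η * (u 5 * v 2 - u 2 * v 5),
      -(u 0 * v 2 - u 2 * v 0) - η * (u 3 * v 1 - u 1 * v 3),
      -(u 0 * v 1 - u 1 * v 0) - η * (u 3 * v 2 - u 2 * v 3),
      (u 4 * v 2 - u 2 * v 4) + (u 5 * v 1 - u 1 * v 5),
      η * (u 3 * v 4 - u 4 * v 3) - (u 5 * v 0 - u 0 * v 5),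
      η * (u 3 * v 5 - u 5 * v 3) - (u 4 * v 0 - u 0 * v 4)])
    (fun _ _ _ => by ext k; fin_cases k <;> simp <;> ring)
    (fun _ _ _ => by ext k; fin_cases k <;> simp <;> ring)
    (fun _ _ _ => by ext k; fin_cases k <;> simp <;> ring)
    (fun _ _ _ => by ext k; fin_cases k <;> simp <;> ring)

theorem bracket_apply (η : ℝ) (u v : Fin 6 → ℝ) : bracket η u v =
    ![η * (u 4 * v 1 - u 1 * v 4) + η * (u 5 * v 2 - u 2 * v 5),
      -(u 0 * v 2 - u 2 * v 0) - η * (u 3 * v 1 - u 1 * v 3),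
      -(u 0 * v 1 - u 1 * v 0) - η * (u 3 * v 2 - u 2 * v 3),
      (u 4 * v 2 - u 2 * v 4) + (u 5 * v 1 - u 1 * v 5),
      η * (u 3 * v 4 - u 4 * v 3) - (u 5 * v 0 - u 0 * v 5),
      η * (u 3 * v 5 - u 5 * v 3) - (u 4 * v 0 - u 0 * v 4)] :=
  rfl

theorem bracket_isAlt (η : ℝ) : (bracket η).IsAlt := by
  intro v; ext k; fin_cases k <;> simp [bracket_apply] <;> ring

theorem bracket_jacobi (η : ℝ) (u v w : Fin 6 → ℝ) :
    bracket η (bracket η u v) w + bracket η (bracket η v w) u + bracket η (bracket η w u) v = 0 := by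
  ext k; fin_cases k <;> simp [bracket_apply] <;> ring

/-- The images under `ψ'` of `J, P₀, P₁, P₂, K₁, K₂`, in the coordinates of `bracket`. -/
noncomputable def psiImage (η : ℝ) : Fin 6 → Fin 6 → ℝ :=
  ![(√(2 * η))⁻¹ • (Pi.single 2 1 - Pi.single 4 1), √(η / 2) • (Pi.single 1 1 - Pi.single 5 1),
    √(η / 2) • (Pi.single 1 1 + Pi.single 5 1), -(η • Pi.single 0 1), -(η⁻¹ • Pi.single 3 1),
    -((√(2 * η))⁻¹ • (Pi.single 2 1 + Pi.single 4 1))]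

theorem exists_pos_eq_two_mul_sq {η : ℝ} (hη : 0 < η) : ∃ s : ℝ, 0 < s ∧ η = 2 * s ^ 2 :=
  ⟨√(η / 2), by positivity, by rw [Real.sq_sqrt (by positivity)]; ring⟩

theorem psiImage_two_mul_sq {s : ℝ} (hs : 0 < s) : psiImage (2 * s ^ 2) =
    ![![0, 0, (2 * s)⁻¹, 0, -(2 * s)⁻¹, 0], ![0, s, 0, 0, 0, -s], ![0, s, 0, 0, 0, s],
      ![-(2 * s ^ 2), 0, 0, 0, 0, 0], ![0, 0, 0, -(2 * s ^ 2)⁻¹, 0, 0],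
      ![0, 0, -(2 * s)⁻¹, 0, -(2 * s)⁻¹, 0]] := by
  have hsqrt : √(2 * (2 * s ^ 2)) = 2 * s := by
    rw [show 2 * (2 * s ^ 2) = (2 * s) ^ 2 by ring, Real.sqrt_sq (by positivity)]
  ext i k; fin_cases i <;> fin_cases k <;> simp [psiImage, hsqrt, Real.sqrt_sq hs.le]

theorem linearIndependent_psiImage {η : ℝ} (hη : 0 < η) : LinearIndependent ℝ (psiImage η) := by
  obtain ⟨s, hs, rfl⟩ := exists_pos_eq_two_mul_sq hη
  rw [psiImage_two_mul_sq hs]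
  refine Fintype.linearIndependent_iff.2 fun c hc => ?_
  have h0 := congrFun hc 0; have h1 := congrFun hc 1; have h2 := congrFun hc 2
  have h3 := congrFun hc 3; have h4 := congrFun hc 4; have h5 := congrFun hc 5
  simp only [Fin.sum_univ_six, Finset.sum_apply, Pi.smul_apply, smul_eq_mul, Matrix.cons_val,
    Matrix.cons_val_zero, Matrix.cons_val_one, Pi.zero_apply, mul_zero, mul_neg, add_zero,
    zero_add, neg_eq_zero, mul_eq_zero, inv_eq_zero, mul_inv_rev, pow_eq_zero_iff, hs.ne',
    OfNat.ofNat_ne_zero, ne_eq, not_false_eq_true, or_self, or_false] at h0 h1 h2 h3 h4 h5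
  have ha : s⁻¹ * 2⁻¹ ≠ 0 := by positivity
  have e1 : (c 1 + c 2) * s = 0 := by linarith
  have e5 : (c 2 - c 1) * s = 0 := by linarith
  have e2 : (c 0 - c 5) * (s⁻¹ * 2⁻¹) = 0 := by linarith
  have e4 : (c 0 + c 5) * (s⁻¹ * 2⁻¹) = 0 := by linarith
  simp only [mul_eq_zero, hs.ne', ha, or_false] at e1 e5 e2 e4
  intro i; fin_cases i <;> simp <;> linarith

end DoubleIso11

open DoubleIso11

theorem double_iso11_exists_and_iso
    (η : ℝ) (hη : 0 < η) (g : Type*) [LieRing g] [LieAlgebra ℝ g]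
    (J P0 P1 P2 K1 K2 : g)
    (hind : LinearIndependent ℝ ![J, P0, P1, P2, K1, K2])
    (hspan : Submodule.span ℝ (Set.range ![J, P0, P1, P2, K1, K2]) = ⊤)
    (hJP1 : ⁅J, P1⁆ = P2) (hJP2 : ⁅J, P2⁆ = -P1)
    (hJK1 : ⁅J, K1⁆ = K2) (hJK2 : ⁅J, K2⁆ = -K1) (hJP0 : ⁅J, P0⁆ = 0)
    (hP1K1 : ⁅P1, K1⁆ = -P0) (hP2K2 : ⁅P2, K2⁆ = -P0)
    (hP1K2 : ⁅P1, K2⁆ = 0) (hP2K1 : ⁅P2, K1⁆ = 0)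
    (hP0K1 : ⁅P0, K1⁆ = -P1) (hP0K2 : ⁅P0, K2⁆ = -P2)
    (hK1K2 : ⁅K1, K2⁆ = -J)
    (hP0P1 : ⁅P0, P1⁆ = (η ^ 2) • K1) (hP0P2 : ⁅P0, P2⁆ = (η ^ 2) • K2)
    (hP1P2 : ⁅P1, P2⁆ = -((η ^ 2) • J)) :
    let X0 : Fin 6 → ℝ := Pi.single 0 1
    let X1 : Fin 6 → ℝ := Pi.single 1 1
    let X2 : Fin 6 → ℝ := Pi.single 2 1
    let x0 : Fin 6 → ℝ := Pi.single 3 1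
    let x1 : Fin 6 → ℝ := Pi.single 4 1
    let x2 : Fin 6 → ℝ := Pi.single 5 1
    ∃ br : (Fin 6 → ℝ) →ₗ[ℝ] (Fin 6 → ℝ) →ₗ[ℝ] (Fin 6 → ℝ),
      -- the bracket is alternating and satisfies the Jacobi identity
      (∀ v, br v v = 0) ∧
      (∀ u v w, br (br u v) w + br (br v w) u + br (br w u) v = 0) ∧
      -- the defining structure constants of `D(iso(1,1))`
      br X0 X1 = -X2 ∧ br X0 X2 = -X1 ∧ br X1 X2 = 0 ∧
      br x0 x1 = η • x1 ∧ br x0 x2 = η • x2 ∧ br x1 x2 = 0 ∧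
      br x0 X0 = 0 ∧ br x0 X1 = -(η • X1) ∧ br x0 X2 = -(η • X2) ∧
      br x1 X0 = -x2 ∧ br x1 X1 = η • X0 ∧ br x1 X2 = x0 ∧
      br x2 X0 = -x1 ∧ br x2 X1 = x0 ∧ br x2 X2 = η • X0 ∧
      -- and ψ' is a Lie algebra isomorphism from g_{η²} onto this Lie algebra
      ∃ ψ : g →ₗ[ℝ] (Fin 6 → ℝ),
        Function.Bijective ψ ∧
        (∀ u v : g, ψ ⁅u, v⁆ = br (ψ u) (ψ v)) ∧
        ψ J = (Real.sqrt (2 * η))⁻¹ • (X2 - x1) ∧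
        ψ K1 = -(η⁻¹ • x0) ∧
        ψ K2 = -((Real.sqrt (2 * η))⁻¹ • (X2 + x1)) ∧
        ψ P0 = Real.sqrt (η / 2) • (X1 - x2) ∧
        ψ P1 = Real.sqrt (η / 2) • (X1 + x2) ∧
        ψ P2 = -(η • X0) := by
  dsimp only
  let b := Module.Basis.mk hind hspan.ge
  obtain ⟨ψ, hψ⟩ := b.exists_linearEquiv_apply_eq (linearIndependent_psiImage hη) (by simp)
  simp only [b, Module.Basis.mk_apply] at hψ
  obtain ⟨hψJ, hψP0, hψP1, hψP2, hψK1, hψK2⟩ : ψ J = psiImage η 0 ∧ ψ P0 = psiImage η 1 ∧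
      ψ P1 = psiImage η 2 ∧ ψ P2 = psiImage η 3 ∧ ψ K1 = psiImage η 4 ∧ ψ K2 = psiImage η 5 :=
    ⟨hψ 0, hψ 1, hψ 2, hψ 3, hψ 4, hψ 5⟩
  have hψ_lie (u v : g) : ψ ⁅u, v⁆ = bracket η (ψ u) (ψ v) := by
    obtain ⟨s, hs, rfl⟩ := exists_pos_eq_two_mul_sq hη
    refine ψ.toLinearMap.map_lie_of_basis_of_lt b _ (bracket_isAlt _) (fun i j hij => ?_) u v
    simp only [b, Module.Basis.mk_apply, LinearEquiv.coe_coe]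
    fin_cases i <;> fin_cases j <;>
      simp only [Fin.reduceFinMk, Fin.reduceLT, Matrix.cons_val] at hij ⊢
    all_goals
      simp only [hJP1, hJP2, hJK1, hJK2, hJP0, hP1K1, hP2K2, hP1K2, hP2K1, hP0K1, hP0K2, hK1K2,
        hP0P1, hP0P2, hP1P2, map_neg, map_smul, map_zero, hψJ, hψP0, hψP1, hψP2, hψK1, hψK2,
        psiImage_two_mul_sq hs, Matrix.cons_val, bracket_apply]
      ext k; fin_cases k <;> simp <;> field_simp <;> ring
  refine ⟨bracket η, bracket_isAlt η, bracket_jacobi η, ?_, ?_, ?_, ?_, ?_, ?_, ?_, ?_, ?_, ?_,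
    ?_, ?_, ?_, ?_, ?_, ψ.toLinearMap, ψ.bijective, hψ_lie, hψJ, hψK1, hψK2, hψP0, hψP1, hψP2⟩
  all_goals ext k; fin_cases k <;> simp [bracket_apply]
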